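/- Commutator relation in the twisted algebra S: let H = ℚ[z₁, z₂, …] with derivation ∂ (∂z_j = z_{j-1} for j > 1, ∂z₁ = r), and consider operators on solution sequences: t(P)_i = P_{i-1} (shift, with t(P)₀ = 0) and z_j(P)_i = ∑_{k≥0} (-1)^k binom(i+k, k) P_{i+k} z_{j-k} (with z₀ = r and z_{j-k} = 0 for j-k < 0). Then t ∘ z_j - z_j ∘ t = z_{j-1} as operators on solution sequences (sequences with ∂P_i = P_{i-1}, P_{-1}=0). -/

import Mathlib

open MvPolynomial

/-- In `H = ℚ[z₁, z₂, …]`, `zGen r k` denotes `z_k`, with `z₀ = r` a scalar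
(variable `X (k-1)` stands for `z_k` for `k ≥ 1`). -/
noncomputable def zGen (r : ℚ) : ℕ → MvPolynomial ℕ ℚ
  | 0 => C r
  | k + 1 => X k

/-- The shift operator `t` on sequences: `t(P)₀ = 0`, `t(P)_i = P_{i-1}`. -/
noncomputable def tOp (P : ℕ → MvPolynomial ℕ ℚ) : ℕ → MvPolynomial ℕ ℚ
  | 0 => 0
  | i + 1 => P i

/-- The operator `z_j` on sequences:
`z_j(P)_i = ∑_{k} (-1)^k binom(i+k,k) P_{i+k} z_{j-k}` (with `z_{j-k} = 0` for
`j-k < 0`, so the sum runs over `0 ≤ k ≤ j`). -/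
noncomputable def zOp (r : ℚ) (j : ℕ) (P : ℕ → MvPolynomial ℕ ℚ) (i : ℕ) :
    MvPolynomial ℕ ℚ :=
  ∑ k ∈ Finset.range (j + 1),
    C ((-1 : ℚ) ^ k * (Nat.choose (i + k) k : ℚ)) * (P (i + k) * zGen r (j - k))

/-! Splitting off the `k = 0` term of `z_{j+1}` and reindexing leaves a sum against
`z_{j-k}` with coefficients `(-1)^(k+1) binom(i+k+1, k+1)`. Applied to `t P` at `i = 0` these
coefficients are `(-1)^(k+1)`, which is `-z_j(P)_0`; for `i = m + 1` the difference of the two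
sums is `z_j(P)_{m+1}` by Pascal's rule. -/

open Finset

section

variable (r : ℚ)

lemma zOp_succ (j : ℕ) (Q : ℕ → MvPolynomial ℕ ℚ) (i : ℕ) :
    zOp r (j + 1) Q i = Q i * zGen r (j + 1) -
      ∑ k ∈ range (j + 1),
        C ((-1 : ℚ) ^ k * ((i + k + 1).choose (k + 1) : ℚ)) * (Q (i + k + 1) * zGen r (j - k)) := by
  rw [zOp, sum_range_succ', sub_eq_neg_add, ← sum_neg_distrib]
  simp [pow_succ, ← add_assoc]

lemma zOp_succ_tOp_zero (j : ℕ) (P : ℕ → MvPolynomial ℕ ℚ) :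
    zOp r (j + 1) (tOp P) 0 = -zOp r j P 0 := by
  rw [zOp_succ, zOp]
  simp [tOp]

lemma zOp_succ_sub_zOp_succ_tOp_succ (j m : ℕ) (P : ℕ → MvPolynomial ℕ ℚ) :
    zOp r (j + 1) P m - zOp r (j + 1) (tOp P) (m + 1) = zOp r j P (m + 1) := by
  simp only [zOp_succ, tOp]
  rw [sub_sub_sub_cancel_left, ← sum_sub_distrib, zOp]
  refine sum_congr rfl fun k _ => ?_
  rw [Nat.choose_succ_succ', Nat.add_right_comm m k 1, ← sub_mul, ← map_sub]
  congr 2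
  push_cast
  ring

end

theorem commutator_t_zj_general (r : ℚ)
    (P : ℕ → MvPolynomial ℕ ℚ) :
    ∀ (j i : ℕ),
      tOp (zOp r (j + 1) P) i - zOp r (j + 1) (tOp P) i = zOp r j P i := by
  rintro j (_ | m)
  · simp [tOp, zOp_succ_tOp_zero]
  · exact zOp_succ_sub_zOp_succ_tOp_succ r j m P

/-- Commutator relation in the twisted algebra `S`: on solution sequences
(`∂P_i = P_{i-1}`, `P_{-1} = 0`) we have `t ∘ z_j - z_j ∘ t = z_{j-1}`. -/
theorem commutator_t_zj (r : ℚ)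
    (D : Derivation ℚ (MvPolynomial ℕ ℚ) (MvPolynomial ℕ ℚ))
    (hD1 : D (X 0) = C r) (hD : ∀ j : ℕ, D (X (j + 1)) = X j)
    (P : ℕ → MvPolynomial ℕ ℚ)
    (hP0 : D (P 0) = 0) (hP : ∀ i : ℕ, D (P (i + 1)) = P i) :
    ∀ (j i : ℕ),
      tOp (zOp r (j + 1) P) i - zOp r (j + 1) (tOp P) i = zOp r j P i :=
  commutator_t_zj_general r P
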